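/- There exist functions φ₁, φ₂ : GL₂(K) → ℂ, each invariant under scalar multiplication by Kˣ (φᵢ(λg) = φᵢ(g) for all λ ∈ Kˣ), such that p_*h̃ − p_*f̃ = φ₁ + φ₂, where φ₁ is invariant under right translation by the diagonal torus over R (φ₁(g·diag(a,d)) = φ₁(g) for all a, d ∈ Rˣ and g ∈ GL₂(K)), and φ₂ is an eigenfunction under left translation by the diagonal torus over R with quadratic eigencharacter (φ₂(diag(a,d)·g) = χ(ā)·χ(d̄)·φ₂(g) for all a, d ∈ Rˣ and g ∈ GL₂(K)). -/

import Mathlib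

open IsLocalRing

noncomputable section

variable (R : Type*) [CommRing R] [IsDomain R] [IsDiscreteValuationRing R]
  [Fintype (ResidueField R)] [DecidableEq (ResidueField R)]

/-- The condition defining the set `𝕄` of `2×2` matrices over `R` whose determinant has
valuation exactly `1`. -/
def inMM (M : Matrix (Fin 2) (Fin 2) R) : Prop :=
  M.det ∈ maximalIdeal R ∧ M.det ∉ (maximalIdeal R) ^ 2

/-- The function `h̃` on `Mat₂(R)`, supported on `𝕄`: for `M ∈ 𝕄`,
`h̃(M) = (1/2)·∏ᵢⱼ(1+χ(M̄ᵢⱼ))` if all four entries of `M` are units, and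
`h̃(M) = ∏ᵢⱼ(1+χ(M̄ᵢⱼ))` otherwise. -/
def htildeR (M : Matrix (Fin 2) (Fin 2) R) : ℂ := by
  classical
  exact
    if inMM R M then
      if ∀ i j, IsUnit (M i j) then
        (2 : ℂ)⁻¹ * ∏ i : Fin 2, ∏ j : Fin 2,
          ((1 + quadraticChar (ResidueField R) (residue R (M i j)) : ℤ) : ℂ)
      else
        ∏ i : Fin 2, ∏ j : Fin 2,
          ((1 + quadraticChar (ResidueField R) (residue R (M i j)) : ℤ) : ℂ)
    else 0

/-- The function `f̃` on `Mat₂(R)`, supported on `𝕄`: for `M ∈ 𝕄`,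
`f̃(M) = χ(M̄₁₁·M̄₁₂)` if `M₁₁, M₁₂` are units, `f̃(M) = χ(M̄₂₁·M̄₂₂)` if `M₂₁, M₂₂` are
units, and `f̃(M) = 0` otherwise. -/
def ftildeR (M : Matrix (Fin 2) (Fin 2) R) : ℂ := by
  classical
  exact
    if inMM R M then
      if IsUnit (M 0 0) ∧ IsUnit (M 0 1) then
        ((quadraticChar (ResidueField R) (residue R (M 0 0) * residue R (M 0 1)) : ℤ) : ℂ)
      else if IsUnit (M 1 0) ∧ IsUnit (M 1 1) then
        ((quadraticChar (ResidueField R) (residue R (M 1 0) * residue R (M 1 1)) : ℤ) : ℂ)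
      else 0
    else 0

variable (K : Type*) [Field K] [Algebra R K] [IsFractionRing R K]

/-- Extend a function on `Mat₂(R)` to a function on `Mat₂(K)` (vanishing on matrices with
entries not integral over `R`); this realizes `h̃` and `f̃` as functions on `GL₂(K)` vanishing
outside `𝕄`. -/
def extendToK (φR : Matrix (Fin 2) (Fin 2) R → ℂ) (g : Matrix (Fin 2) (Fin 2) K) : ℂ := by
  classical
  exact
    if h : ∃ M : Matrix (Fin 2) (Fin 2) R, M.map (algebraMap R K) = g then φR h.choose else 0

/-- The fiberwise integral along `GL₂(K) → PGL₂(K)` (normalized so that each `Rˣ`-orbit has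
volume 1): `(p_*φ)(g) = (q−1)⁻¹ · Σ_{n ∈ ℤ} Σ_{c ∈ Fˣ} φ(πⁿ·ĉ·g)`. -/
def pStar (π : R) (lft : (ResidueField R)ˣ → Rˣ)
    (φ : Matrix (Fin 2) (Fin 2) K → ℂ) (g : Matrix (Fin 2) (Fin 2) K) : ℂ :=
  ((Fintype.card (ResidueField R) : ℂ) - 1)⁻¹ *
    ∑' n : ℤ, ∑ c : (ResidueField R)ˣ,
      φ (((algebraMap R K π) ^ n * algebraMap R K ((lft c : R))) • g)

end


/-!
The line `Kˣ·g` meets `𝕄` in at most one `Rˣ`-orbit `Rˣ·M`: if `M' = μ M` with both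
determinants of valuation one, then `μ` is a unit of `R`. Hence both fibre integrals at `g` vanish
unless such an `M` exists, and otherwise they are averages over `c ∈ Fˣ` of a function of the sign
pattern `χ(c)·χ(M̄ᵢⱼ)`. Since `χ` takes the values `±1` equally often on `Fˣ`, such an average is
the mean of the values at `A = χ(M̄)` and at `-A`. As `M̄` has rank one, a finite check over sign
patterns gives `p_*h̃ − p_*f̃ = 1 + ψ(A)`. The constant `1` is the indicator of `Kˣ·𝕄`, which is
right `GL₂(R)`-invariant, and `ψ(A)` picks up `χ(ā)χ(d̄)` under `M ↦ diag(a,d)·M`.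
-/

open Matrix

namespace FiberIntegral

section FiniteField

variable {F : Type*} [Field F] [Fintype F]

theorem ringChar_ne_two_of_odd_card (h : Odd (Fintype.card F)) : ringChar F ≠ 2 := fun h2 => by
  have := FiniteField.even_card_iff_char_two.mp h2
  rw [Nat.odd_iff] at h
  omega

variable [DecidableEq F]

theorem sum_units_quadraticChar (hF : ringChar F ≠ 2) : ∑ c : Fˣ, quadraticChar F c = 0 := by
  obtain ⟨a, ha⟩ := quadraticChar_exists_neg_one' hF
  have hneg : ∑ c : Fˣ, quadraticChar F c = -∑ c : Fˣ, quadraticChar F c :=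
    calc ∑ c : Fˣ, quadraticChar F c = ∑ c : Fˣ, quadraticChar F ↑(a * c) :=
          (Equiv.sum_comp (Equiv.mulLeft a) _).symm
      _ = -∑ c : Fˣ, quadraticChar F c := by
          simp only [Units.val_mul, map_mul, ha, neg_one_mul,
            Finset.sum_neg_distrib]
  omega

theorem sum_units_comp_quadraticChar (hF : ringChar F ≠ 2) (G : ℤ → ℂ) :
    ∑ c : Fˣ, G (quadraticChar F c) = ((Fintype.card F : ℂ) - 1) * ((G 1 + G (-1)) / 2) := by
  have hG : ∀ c : Fˣ, G (quadraticChar F c) =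
      (G 1 + G (-1)) / 2 + (quadraticChar F c : ℂ) * ((G 1 - G (-1)) / 2) := by
    intro c
    rcases quadraticChar_dichotomy c.ne_zero with h | h <;> rw [h] <;> push_cast <;> ring
  simp only [hG, Finset.sum_add_distrib, ← Finset.sum_mul, ← Int.cast_sum,
    sum_units_quadraticChar hF, Finset.sum_const, Finset.card_univ, nsmul_eq_mul,
    Fintype.card_units, Nat.cast_sub Fintype.card_pos]
  simp

end FiniteField

section Signs

/-- `2·h̃(M)` as a function of the signs `A = (χ(M̄ᵢⱼ))`; doubled so that it is integer valued. -/
def hOfSigns (A : Matrix (Fin 2) (Fin 2) ℤ) : ℤ :=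
  (if A 0 0 ≠ 0 ∧ A 0 1 ≠ 0 ∧ A 1 0 ≠ 0 ∧ A 1 1 ≠ 0 then 1 else 2) * ∏ i, ∏ j, (1 + A i j)

def fOfSigns (A : Matrix (Fin 2) (Fin 2) ℤ) : ℤ :=
  if A 0 0 ≠ 0 ∧ A 0 1 ≠ 0 then A 0 0 * A 0 1
  else if A 1 0 ≠ 0 ∧ A 1 1 ≠ 0 then A 1 0 * A 1 1 else 0

/-- On the signs of a rank one matrix `v wᵀ` over the residue field this is
`χ(v₁v₂)(1 + χ(w₁w₂))`. -/
def psiOfSigns (A : Matrix (Fin 2) (Fin 2) ℤ) : ℤ :=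
  if A 0 0 ≠ 0 ∧ A 1 0 ≠ 0 then A 0 0 * A 1 0 * (1 + A 0 0 * A 0 1)
  else if A 0 1 ≠ 0 ∧ A 1 1 ≠ 0 then A 0 1 * A 1 1 * (1 + A 1 0 * A 1 1) else 0

theorem hOfSigns_add_neg_sub_fOfSigns {A : Matrix (Fin 2) (Fin 2) ℤ}
    (hA : ∀ i j, A i j ∈ ({-1, 0, 1} : Finset ℤ)) (hdet : A.det = 0) (hA0 : A ≠ 0) :
    hOfSigns A + hOfSigns (-A) - 2 * (fOfSigns A + fOfSigns (-A)) = 4 * (1 + psiOfSigns A) := by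
  have key : ∀ a ∈ ({-1, 0, 1} : Finset ℤ), ∀ b ∈ ({-1, 0, 1} : Finset ℤ),
      ∀ c ∈ ({-1, 0, 1} : Finset ℤ), ∀ d ∈ ({-1, 0, 1} : Finset ℤ),
      a * d = b * c → ¬(a = 0 ∧ b = 0 ∧ c = 0 ∧ d = 0) →
      hOfSigns !![a, b; c, d] + hOfSigns (-!![a, b; c, d])
        - 2 * (fOfSigns !![a, b; c, d] + fOfSigns (-!![a, b; c, d]))
        = 4 * (1 + psiOfSigns !![a, b; c, d]) := by
    decide
  rw [eta_fin_two A] at hdet hA0 ⊢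
  refine key _ (hA 0 0) _ (hA 0 1) _ (hA 1 0) _ (hA 1 1) ?_ ?_
  · rwa [det_fin_two_of, sub_eq_zero] at hdet
  · rintro ⟨h₀₀, h₀₁, h₁₀, h₁₁⟩
    exact hA0 (by rw [h₀₀, h₀₁, h₁₀, h₁₁]; exact (eta_fin_two 0).symm)

theorem psiOfSigns_diagonal_mul {s t : ℤ} (hs : s = 1 ∨ s = -1) (ht : t = 1 ∨ t = -1)
    (A : Matrix (Fin 2) (Fin 2) ℤ) :
    psiOfSigns (diagonal ![s, t] * A) = s * t * psiOfSigns A := by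
  rcases hs with rfl | rfl <;> rcases ht with rfl | rfl <;>
    simp [psiOfSigns, diagonal_mul]

theorem psiOfSigns_smul {s : ℤ} (hs : s = 1 ∨ s = -1) (A : Matrix (Fin 2) (Fin 2) ℤ) :
    psiOfSigns (s • A) = psiOfSigns A := by
  rw [smul_eq_diagonal_mul, show (diagonal fun _ : Fin 2 => s) = diagonal ![s, s] by
      congr; ext i; fin_cases i <;> rfl,
    psiOfSigns_diagonal_mul hs hs]
  rcases hs with rfl | rfl <;> simp

end Signs

section ResidueSigns

variable {R : Type*} [CommRing R] [IsLocalRing R]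
  [Fintype (ResidueField R)] [DecidableEq (ResidueField R)]

noncomputable def residueSigns (M : Matrix (Fin 2) (Fin 2) R) : Matrix (Fin 2) (Fin 2) ℤ :=
  M.map fun x => quadraticChar (ResidueField R) (residue R x)

theorem residueSigns_apply_ne_zero_iff (M : Matrix (Fin 2) (Fin 2) R) (i j : Fin 2) :
    residueSigns M i j ≠ 0 ↔ IsUnit (M i j) := by
  rw [residueSigns, map_apply, Ne, quadraticChar_eq_zero_iff, residue_eq_zero_iff,
    mem_maximalIdeal, mem_nonunits_iff, not_not]

theorem residueSigns_mem (M : Matrix (Fin 2) (Fin 2) R) (i j : Fin 2) :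
    residueSigns M i j ∈ ({-1, 0, 1} : Finset ℤ) := by
  show quadraticChar _ (residue R (M i j)) ∈ _
  rcases quadraticChar_isQuadratic (ResidueField R) (residue R (M i j)) with h | h | h <;>
    rw [h] <;> decide

theorem quadraticChar_residue_units (v : Rˣ) :
    quadraticChar (ResidueField R) (residue R v) = 1 ∨
      quadraticChar (ResidueField R) (residue R v) = -1 :=
  quadraticChar_dichotomy (v.isUnit.map (residue R)).ne_zero

theorem residueSigns_smul (r : R) (M : Matrix (Fin 2) (Fin 2) R) :
    residueSigns (r • M) = quadraticChar (ResidueField R) (residue R r) • residueSigns M := by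
  ext i j
  simp only [residueSigns, map_apply, Matrix.smul_apply, smul_eq_mul, map_mul]

theorem residueSigns_diagonal_mul (a d : R) (M : Matrix (Fin 2) (Fin 2) R) :
    residueSigns (diagonal ![a, d] * M) =
      diagonal ![quadraticChar (ResidueField R) (residue R a),
        quadraticChar (ResidueField R) (residue R d)] * residueSigns M := by
  ext i j
  fin_cases i <;>
    simp only [residueSigns, map_apply, diagonal_mul, map_mul, Fin.zero_eta, Fin.mk_one,
      cons_val_zero, cons_val_one, cons_val_fin_one]

theorem det_residueSigns {M : Matrix (Fin 2) (Fin 2) R} (h : M.det ∈ maximalIdeal R) :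
    (residueSigns M).det = 0 := by
  rw [← residue_eq_zero_iff, det_fin_two, map_sub, sub_eq_zero] at h
  rw [det_fin_two, sub_eq_zero]
  simp only [residueSigns, map_apply]
  rw [← map_mul, ← map_mul, ← map_mul, ← map_mul, h]

theorem residueSigns_ne_zero {M : Matrix (Fin 2) (Fin 2) R} (h : M.det ∉ maximalIdeal R ^ 2) :
    residueSigns M ≠ 0 := by
  intro h0
  have hm : ∀ i j, M i j ∈ maximalIdeal R := fun i j =>
    mem_nonunits_iff.mpr fun hu => (residueSigns_apply_ne_zero_iff M i j).mpr hu (by rw [h0]; rfl)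
  apply h
  rw [det_fin_two, sq]
  exact sub_mem (Ideal.mul_mem_mul (hm 0 0) (hm 1 1)) (Ideal.mul_mem_mul (hm 0 1) (hm 1 0))

end ResidueSigns

section DVR

variable {R : Type*} [CommRing R] [IsDomain R] [IsDiscreteValuationRing R]

theorem irreducible_iff_mem_maximalIdeal_and_notMem_sq {x : R} :
    Irreducible x ↔ x ∈ maximalIdeal R ∧ x ∉ maximalIdeal R ^ 2 := by
  constructor
  · intro hx
    rw [hx.maximalIdeal_eq, Ideal.span_singleton_pow, Ideal.mem_span_singleton,
      Ideal.mem_span_singleton]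
    refine ⟨dvd_rfl, fun ⟨y, hy⟩ => hx.not_isUnit (IsUnit.of_mul_eq_one y ?_)⟩
    exact mul_left_cancel₀ hx.ne_zero (by rw [mul_one, ← mul_assoc, ← sq, ← hy])
  · rintro ⟨hm, hsq⟩
    obtain ⟨ϖ, hϖ⟩ := IsDiscreteValuationRing.exists_irreducible R
    rw [hϖ.maximalIdeal_eq, Ideal.mem_span_singleton] at hm
    obtain ⟨y, rfl⟩ := hm
    refine (irreducible_mul_isUnit ?_).mpr hϖ
    by_contra hy
    have hy' : y ∈ maximalIdeal R := hy
    rw [hϖ.maximalIdeal_eq, Ideal.mem_span_singleton] at hy'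
    apply hsq
    rw [hϖ.maximalIdeal_eq, Ideal.span_singleton_pow, Ideal.mem_span_singleton, sq]
    exact mul_dvd_mul_left ϖ hy'

variable {K : Type*} [Field K] [Algebra R K] [IsFractionRing R K]

/-- Writing `μ = x / y`, comparing determinants gives `y² det M' = x² det M`, which forces
`x ~ y` since both determinants are uniformizers. -/
theorem exists_units_eq_of_map_eq_smul {M M' : Matrix (Fin 2) (Fin 2) R}
    (hM : Irreducible M.det) (hM' : Irreducible M'.det) {μ : K}
    (h : M'.map (algebraMap R K) = μ • M.map (algebraMap R K)) :
    ∃ v : Rˣ, μ = algebraMap R K v := by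
  obtain ⟨x, y, hy, rfl⟩ := IsFractionRing.div_surjective (A := R) μ
  have hyK : algebraMap R K y ≠ 0 := IsFractionRing.to_map_ne_zero_of_mem_nonZeroDivisors hy
  have hR : y • M' = x • M := by
    refine map_injective (IsFractionRing.injective R K) ?_
    simp only [map_smul' _ _ _ (map_mul (algebraMap R K)), h, smul_smul]
    rw [mul_div_cancel₀ _ hyK]
  have hdet : y ^ 2 * M'.det = x ^ 2 * M.det := by
    simpa [det_smul] using congrArg det hR
  have hsq : Associated (y ^ 2) (x ^ 2) :=
    (hdet ▸ Associated.refl _ : Associated (y ^ 2 * M'.det) (x ^ 2 * M.det)).of_mul_right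
      (IsDiscreteValuationRing.associated_of_irreducible R hM' hM) hM'.ne_zero
  obtain ⟨u, hu⟩ : Associated x y := associated_of_dvd_dvd
    ((IsIntegrallyClosed.pow_dvd_pow_iff two_ne_zero).mp hsq.symm.dvd)
    ((IsIntegrallyClosed.pow_dvd_pow_iff two_ne_zero).mp hsq.dvd)
  have hxK : algebraMap R K x ≠ 0 := fun h0 => hyK (by rw [← hu, map_mul, h0, zero_mul])
  refine ⟨u⁻¹, ?_⟩
  rw [← hu, map_mul, div_mul_cancel_left₀ hxK, ← map_units_inv]

theorem inMM_iff_irreducible_det {M : Matrix (Fin 2) (Fin 2) R} :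
    inMM R M ↔ Irreducible M.det :=
  irreducible_iff_mem_maximalIdeal_and_notMem_sq.symm

theorem inMM_units_smul_iff (v : Rˣ) {M : Matrix (Fin 2) (Fin 2) R} :
    inMM R ((v : R) • M) ↔ inMM R M := by
  rw [inMM_iff_irreducible_det, inMM_iff_irreducible_det, det_smul, Fintype.card_fin,
    ← Units.val_pow_eq_pow_val, irreducible_units_mul]

theorem inMM_mul_right_iff {P M : Matrix (Fin 2) (Fin 2) R} (hP : IsUnit P.det) :
    inMM R (M * P) ↔ inMM R M := by
  rw [inMM_iff_irreducible_det, inMM_iff_irreducible_det, det_mul, irreducible_mul_isUnit hP]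

theorem inMM_mul_left_iff {P M : Matrix (Fin 2) (Fin 2) R} (hP : IsUnit P.det) :
    inMM R (P * M) ↔ inMM R M := by
  rw [inMM_iff_irreducible_det, inMM_iff_irreducible_det, det_mul, irreducible_isUnit_mul hP]

variable [Fintype (ResidueField R)] [DecidableEq (ResidueField R)]

variable (R) in
open scoped Classical in
noncomputable def ofSigns (Φ : Matrix (Fin 2) (Fin 2) ℤ → ℂ) (M : Matrix (Fin 2) (Fin 2) R) : ℂ :=
  if inMM R M then Φ (residueSigns M) else 0

theorem htildeR_eq : htildeR R = ofSigns R fun A => (hOfSigns A : ℂ) / 2 := by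
  ext M
  have hunits : (∀ i j, IsUnit (M i j)) ↔ residueSigns M 0 0 ≠ 0 ∧ residueSigns M 0 1 ≠ 0 ∧
      residueSigns M 1 0 ≠ 0 ∧ residueSigns M 1 1 ≠ 0 := by
    simp only [residueSigns_apply_ne_zero_iff, Fin.forall_fin_two, and_assoc]
  simp only [htildeR, ofSigns, hOfSigns, hunits]
  split_ifs <;> push_cast [residueSigns, map_apply] <;> ring

theorem ftildeR_eq : ftildeR R = ofSigns R fun A => (fOfSigns A : ℂ) := by
  ext M
  have hrow : ∀ i, IsUnit (M i 0) ∧ IsUnit (M i 1) ↔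
      residueSigns M i 0 ≠ 0 ∧ residueSigns M i 1 ≠ 0 := fun i => by
    simp only [residueSigns_apply_ne_zero_iff]
  simp only [ftildeR, ofSigns, fOfSigns, hrow]
  split_ifs <;> push_cast [residueSigns, map_apply, map_mul] <;> rfl

end DVR

section Diagonal

variable {R : Type*} [CommRing R]

theorem map_diagonal_pair {S : Type*} [CommRing S] (f : R →+* S) (a d : R) :
    (diagonal ![a, d]).map f = diagonal ![f a, f d] := by
  rw [diagonal_map (map_zero f)]
  congr
  ext i
  fin_cases i <;> rfl

theorem isUnit_det_diagonal_pair (a d : Rˣ) : IsUnit (diagonal ![(a : R), d]).det := by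
  rw [det_diagonal, Fin.prod_univ_two]
  exact a.isUnit.mul d.isUnit

end Diagonal

section Representatives

variable {R : Type*} [CommRing R] [IsDomain R] [IsDiscreteValuationRing R]
  {K : Type*} [Field K] [Algebra R K]

variable (R K) in
def repsMM (g : Matrix (Fin 2) (Fin 2) K) : Set (Matrix (Fin 2) (Fin 2) R) :=
  {M | inMM R M ∧ ∃ c : Kˣ, M.map (algebraMap R K) = (c : K) • g}

theorem repsMM_units_smul (c : Kˣ) (g : Matrix (Fin 2) (Fin 2) K) :
    repsMM R K ((c : K) • g) = repsMM R K g := by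
  ext M
  refine and_congr_right fun _ => ⟨fun ⟨d, hd⟩ => ⟨d * c, ?_⟩, fun ⟨d, hd⟩ => ⟨d * c⁻¹, ?_⟩⟩
  · rw [hd, smul_smul, Units.val_mul]
  · rw [hd, smul_smul, ← Units.val_mul, inv_mul_cancel_right]

theorem mul_mem_repsMM {P M : Matrix (Fin 2) (Fin 2) R} {g : Matrix (Fin 2) (Fin 2) K}
    (hP : IsUnit P.det) (hM : M ∈ repsMM R K g) :
    M * P ∈ repsMM R K (g * P.map (algebraMap R K)) := by
  obtain ⟨hMM, c, hc⟩ := hM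
  exact ⟨(inMM_mul_right_iff hP).mpr hMM, c, by rw [Matrix.map_mul, hc, smul_mul]⟩

theorem mul_mem_repsMM_left {P M : Matrix (Fin 2) (Fin 2) R} {g : Matrix (Fin 2) (Fin 2) K}
    (hP : IsUnit P.det) (hM : M ∈ repsMM R K g) :
    P * M ∈ repsMM R K (P.map (algebraMap R K) * g) := by
  obtain ⟨hMM, c, hc⟩ := hM
  exact ⟨(inMM_mul_left_iff hP).mpr hMM, c, by rw [Matrix.map_mul, hc, Matrix.mul_smul]⟩

theorem repsMM_mul_nonempty_iff {P : Matrix (Fin 2) (Fin 2) R} (hP : IsUnit P.det)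
    (g : Matrix (Fin 2) (Fin 2) K) :
    (repsMM R K (g * P.map (algebraMap R K))).Nonempty ↔ (repsMM R K g).Nonempty := by
  refine ⟨fun ⟨M, hM⟩ => ⟨M * P⁻¹, ?_⟩, fun ⟨M, hM⟩ => ⟨M * P, mul_mem_repsMM hP hM⟩⟩
  have h := mul_mem_repsMM (isUnit_nonsing_inv_det P hP) hM
  rwa [Matrix.mul_assoc, ← Matrix.map_mul, mul_nonsing_inv P hP,
    Matrix.map_one _ (map_zero _) (map_one _), Matrix.mul_one] at h

theorem repsMM_mul_left_nonempty_iff {P : Matrix (Fin 2) (Fin 2) R} (hP : IsUnit P.det)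
    (g : Matrix (Fin 2) (Fin 2) K) :
    (repsMM R K (P.map (algebraMap R K) * g)).Nonempty ↔ (repsMM R K g).Nonempty := by
  refine ⟨fun ⟨M, hM⟩ => ⟨P⁻¹ * M, ?_⟩, fun ⟨M, hM⟩ => ⟨P * M, mul_mem_repsMM_left hP hM⟩⟩
  have h := mul_mem_repsMM_left (isUnit_nonsing_inv_det P hP) hM
  rwa [← Matrix.mul_assoc, ← Matrix.map_mul, nonsing_inv_mul P hP,
    Matrix.map_one _ (map_zero _) (map_one _), Matrix.one_mul] at h

theorem exists_units_smul_eq_of_mem_repsMM [IsFractionRing R K] {g : Matrix (Fin 2) (Fin 2) K}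
    {M M' : Matrix (Fin 2) (Fin 2) R} (hM : M ∈ repsMM R K g) (hM' : M' ∈ repsMM R K g) :
    ∃ v : Rˣ, M' = (v : R) • M := by
  obtain ⟨hMM, c, hc⟩ := hM
  obtain ⟨hMM', c', hc'⟩ := hM'
  have h : M'.map (algebraMap R K) = ((c' * c⁻¹ : Kˣ) : K) • M.map (algebraMap R K) := by
    rw [hc, hc', smul_smul, ← Units.val_mul, inv_mul_cancel_right]
  obtain ⟨v, hv⟩ := exists_units_eq_of_map_eq_smul (inMM_iff_irreducible_det.mp hMM)
    (inMM_iff_irreducible_det.mp hMM') h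
  refine ⟨v, map_injective (IsFractionRing.injective R K) ?_⟩
  simp only [map_smul' _ _ _ (map_mul (algebraMap R K)), h, hv]

variable (R K) in
open scoped Classical in
noncomputable def invariantPart (g : Matrix (Fin 2) (Fin 2) K) : ℂ :=
  if (repsMM R K g).Nonempty then 1 else 0

theorem invariantPart_units_smul (c : Kˣ) (g : Matrix (Fin 2) (Fin 2) K) :
    invariantPart R K ((c : K) • g) = invariantPart R K g := by
  rw [invariantPart, invariantPart, repsMM_units_smul]

theorem invariantPart_mul {P : Matrix (Fin 2) (Fin 2) R} (hP : IsUnit P.det)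
    (g : Matrix (Fin 2) (Fin 2) K) :
    invariantPart R K (g * P.map (algebraMap R K)) = invariantPart R K g := by
  classical
  exact if_congr (repsMM_mul_nonempty_iff hP g) rfl rfl

variable [Fintype (ResidueField R)] [DecidableEq (ResidueField R)]

variable (R K) in
open scoped Classical in
noncomputable def eigenPart (g : Matrix (Fin 2) (Fin 2) K) : ℂ :=
  if h : (repsMM R K g).Nonempty then psiOfSigns (residueSigns h.some) else 0

theorem eigenPart_units_smul (c : Kˣ) (g : Matrix (Fin 2) (Fin 2) K) :
    eigenPart R K ((c : K) • g) = eigenPart R K g := by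
  rw [eigenPart, eigenPart, repsMM_units_smul]

variable [IsFractionRing R K]

theorem eigenPart_eq {g : Matrix (Fin 2) (Fin 2) K} {M : Matrix (Fin 2) (Fin 2) R}
    (hM : M ∈ repsMM R K g) : eigenPart R K g = psiOfSigns (residueSigns M) := by
  have hne : (repsMM R K g).Nonempty := ⟨M, hM⟩
  obtain ⟨v, hv⟩ := exists_units_smul_eq_of_mem_repsMM hM hne.some_mem
  rw [eigenPart, dif_pos hne, hv, residueSigns_smul,
    psiOfSigns_smul (quadraticChar_residue_units v)]

theorem eigenPart_diagonal_mul (a d : Rˣ) (g : Matrix (Fin 2) (Fin 2) K) :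
    eigenPart R K ((diagonal ![(a : R), d]).map (algebraMap R K) * g) =
      quadraticChar (ResidueField R) (residue R a) *
        quadraticChar (ResidueField R) (residue R d) * eigenPart R K g := by
  have hD := isUnit_det_diagonal_pair a d
  by_cases hg : (repsMM R K g).Nonempty
  · obtain ⟨M, hM⟩ := hg
    rw [eigenPart_eq (mul_mem_repsMM_left hD hM), eigenPart_eq hM, residueSigns_diagonal_mul,
      psiOfSigns_diagonal_mul (quadraticChar_residue_units a) (quadraticChar_residue_units d)]
    push_cast
    ring
  · have hg' : ¬(repsMM R K ((diagonal ![(a : R), d]).map (algebraMap R K) * g)).Nonempty := by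
      rwa [repsMM_mul_left_nonempty_iff hD]
    simp only [eigenPart, dif_neg hg, dif_neg hg', mul_zero]

end Representatives

section Extension

variable {R : Type*} [CommRing R] {K : Type*} [Field K] [Algebra R K] [IsFractionRing R K]

theorem extendToK_map (φR : Matrix (Fin 2) (Fin 2) R → ℂ) (M : Matrix (Fin 2) (Fin 2) R) :
    extendToK R K φR (M.map (algebraMap R K)) = φR M := by
  have hex : ∃ M₀ : Matrix (Fin 2) (Fin 2) R, M₀.map (algebraMap R K) = M.map (algebraMap R K) :=
    ⟨M, rfl⟩
  rw [extendToK, dif_pos hex]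
  exact congrArg φR (map_injective (IsFractionRing.injective R K) hex.choose_spec)

omit [IsFractionRing R K] in
theorem exists_map_eq_of_extendToK_ne_zero {φR : Matrix (Fin 2) (Fin 2) R → ℂ}
    {g : Matrix (Fin 2) (Fin 2) K} (h : extendToK R K φR g ≠ 0) :
    ∃ M, M.map (algebraMap R K) = g ∧ φR M ≠ 0 := by
  rw [extendToK] at h
  split_ifs at h with hex
  · exact ⟨hex.choose, hex.choose_spec, h⟩
  · exact absurd rfl h

theorem zpow_eq_algebraMap_units {π : R} (hπ : Irreducible π) {k : ℤ} {v : Rˣ}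
    (h : algebraMap R K π ^ k = algebraMap R K v) : k = 0 := by
  have hπK : algebraMap R K π ≠ 0 := by simpa using hπ.ne_zero
  obtain ⟨a, rfl | rfl⟩ := Int.eq_nat_or_neg k
  · have hu : IsUnit (π ^ a) := by
      rw [IsFractionRing.injective R K (by rw [map_pow, ← zpow_natCast, h] :
        algebraMap R K (π ^ a) = algebraMap R K v)]
      exact v.isUnit
    by_contra ha
    exact hπ.not_isUnit ((isUnit_pow_iff (by omega)).mp hu)
  · have hu : IsUnit (π ^ a) := IsUnit.of_mul_eq_one (v : R) <| IsFractionRing.injective R K <| by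
      rw [map_mul, map_pow, map_one, ← h, _root_.zpow_neg, zpow_natCast,
        mul_inv_cancel₀ (pow_ne_zero _ hπK)]
    by_contra ha
    exact hπ.not_isUnit ((isUnit_pow_iff (by omega)).mp hu)

end Extension

section PushForward

variable {R : Type*} [CommRing R] [IsDomain R] [IsDiscreteValuationRing R]
  {K : Type*} [Field K] [Algebra R K] [IsFractionRing R K] {π : R}

theorem exists_zpow_smul_mem_repsMM (hπ : Irreducible π) {g : Matrix (Fin 2) (Fin 2) K}
    (h : (repsMM R K g).Nonempty) :
    ∃ (n : ℤ) (M : Matrix (Fin 2) (Fin 2) R),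
      M ∈ repsMM R K g ∧ M.map (algebraMap R K) = algebraMap R K π ^ n • g := by
  have hπK : algebraMap R K π ≠ 0 := by simpa using hπ.ne_zero
  obtain ⟨M, hMM, c, hc⟩ := h
  obtain ⟨n, u, hu⟩ :=
    IsDiscreteValuationRing.exists_units_eq_smul_zpow_of_irreducible hπ c.ne_zero
  have hmap : (((u⁻¹ : Rˣ) : R) • M).map (algebraMap R K) = algebraMap R K π ^ n • g := by
    rw [map_smul' _ _ _ (map_mul (algebraMap R K)), hc, hu, smul_smul, Units.smul_def,
      Algebra.smul_def (u : R), ← mul_assoc, ← map_mul, Units.inv_mul, map_one, one_mul]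
  exact ⟨n, _, ⟨(inMM_units_smul_iff _).mpr hMM, Units.mk0 _ (zpow_ne_zero n hπK), hmap⟩, hmap⟩

variable [Fintype (ResidueField R)] [DecidableEq (ResidueField R)]

theorem pStar_ofSigns_eq_zero (hπ : Irreducible π) (lft : (ResidueField R)ˣ → Rˣ)
    (Φ : Matrix (Fin 2) (Fin 2) ℤ → ℂ) {g : Matrix (Fin 2) (Fin 2) K}
    (hg : ¬(repsMM R K g).Nonempty) : pStar R K π lft (extendToK R K (ofSigns R Φ)) g = 0 := by
  have hπK : algebraMap R K π ≠ 0 := by simpa using hπ.ne_zero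
  have hterm : ∀ (n : ℤ) (c : (ResidueField R)ˣ),
      extendToK R K (ofSigns R Φ) ((algebraMap R K π ^ n * algebraMap R K (lft c)) • g) = 0 := by
    intro n c
    by_contra hne
    obtain ⟨M, hM, hΦ⟩ := exists_map_eq_of_extendToK_ne_zero hne
    have hMM : inMM R M := by_contra fun h => hΦ (if_neg h)
    refine hg ⟨M, hMM, Units.mk0 _ (mul_ne_zero (zpow_ne_zero n hπK) ?_), hM⟩
    exact ((lft c).isUnit.map (algebraMap R K)).ne_zero
  simp [pStar, hterm]

/-- Only the power `πⁿ` that makes `g` integral in `𝕄` contributes to `p_*`. -/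
theorem extendToK_ofSigns_zpow_smul_eq_zero (hπ : Irreducible π)
    (Φ : Matrix (Fin 2) (Fin 2) ℤ → ℂ) {g : Matrix (Fin 2) (Fin 2) K} {n m : ℤ}
    {M : Matrix (Fin 2) (Fin 2) R} (hM : inMM R M)
    (hmap : M.map (algebraMap R K) = algebraMap R K π ^ n • g) (hm : m ≠ n) (u : Rˣ) :
    extendToK R K (ofSigns R Φ) ((algebraMap R K π ^ m * algebraMap R K u) • g) = 0 := by
  have hπK : algebraMap R K π ≠ 0 := by simpa using hπ.ne_zero
  by_contra hne
  obtain ⟨M', hM', hΦ⟩ := exists_map_eq_of_extendToK_ne_zero hne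
  have hMM' : inMM R M' := by_contra fun h => hΦ (if_neg h)
  have h : M'.map (algebraMap R K) =
      (algebraMap R K π ^ (m - n) * algebraMap R K u) • M.map (algebraMap R K) := by
    rw [hM', hmap, smul_smul, zpow_sub₀ hπK]
    field_simp
  obtain ⟨v, hv⟩ := exists_units_eq_of_map_eq_smul (inMM_iff_irreducible_det.mp hM)
    (inMM_iff_irreducible_det.mp hMM') h
  refine hm (sub_eq_zero.mp (zpow_eq_algebraMap_units (K := K) hπ (v := v * u⁻¹) ?_))
  rw [Units.val_mul, map_mul, ← hv, map_units_inv,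
    mul_inv_cancel_right₀ (u.isUnit.map (algebraMap R K)).ne_zero]

theorem pStar_ofSigns (hF : ringChar (ResidueField R) ≠ 2) (hπ : Irreducible π)
    {lft : (ResidueField R)ˣ → Rˣ} (hlft : ∀ c, residue R (lft c : R) = c)
    (Φ : Matrix (Fin 2) (Fin 2) ℤ → ℂ) {g : Matrix (Fin 2) (Fin 2) K} {n : ℤ}
    {M : Matrix (Fin 2) (Fin 2) R} (hM : inMM R M)
    (hmap : M.map (algebraMap R K) = algebraMap R K π ^ n • g) :
    pStar R K π lft (extendToK R K (ofSigns R Φ)) g =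
      (Φ (residueSigns M) + Φ (-residueSigns M)) / 2 := by
  have hπK : algebraMap R K π ≠ 0 := by simpa using hπ.ne_zero
  have hterm : ∀ c, extendToK R K (ofSigns R Φ)
      ((algebraMap R K π ^ n * algebraMap R K (lft c)) • g) =
        Φ (quadraticChar (ResidueField R) c • residueSigns M) := by
    intro c
    rw [mul_comm, ← smul_smul, ← hmap, ← map_smul' _ _ _ (map_mul (algebraMap R K)),
      extendToK_map, ofSigns, if_pos ((inMM_units_smul_iff _).mpr hM), residueSigns_smul, hlft]
  have hvanish : ∀ m ≠ n, ∑ c, extendToK R K (ofSigns R Φ)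
      ((algebraMap R K π ^ m * algebraMap R K (lft c)) • g) = 0 := fun m hm =>
    Finset.sum_eq_zero fun c _ => extendToK_ofSigns_zpow_smul_eq_zero hπ Φ hM hmap hm (lft c)
  have hq : (Fintype.card (ResidueField R) : ℂ) - 1 ≠ 0 := by
    rw [sub_ne_zero, Ne, Nat.cast_eq_one]
    exact Fintype.one_lt_card.ne'
  rw [pStar, tsum_eq_single n hvanish, Finset.sum_congr rfl fun c _ => hterm c,
    sum_units_comp_quadraticChar hF fun t => Φ (t • residueSigns M), inv_mul_cancel_left₀ hq,
    one_smul, neg_smul, one_smul]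

end PushForward

end FiberIntegral

open FiberIntegral

/-- There exist functions `φ₁, φ₂ : GL₂(K) → ℂ`, each invariant under scalar
multiplication by `Kˣ`, such that `p_*h̃ − p_*f̃ = φ₁ + φ₂`, where `φ₁` is invariant under
right translation by the diagonal torus over `R` and `φ₂` is an eigenfunction under left
translation by the diagonal torus over `R` with eigencharacter `diag(a,d) ↦ χ(ā)·χ(d̄)`. -/
theorem stmt_7 (R : Type*) [CommRing R] [IsDomain R] [IsDiscreteValuationRing R]
    [Fintype (ResidueField R)] [DecidableEq (ResidueField R)]
    (hodd : Odd (Fintype.card (ResidueField R)))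
    (K : Type*) [Field K] [Algebra R K] [IsFractionRing R K]
    (π : R) (hπ : maximalIdeal R = Ideal.span {π})
    (lft : (ResidueField R)ˣ → Rˣ)
    (hlft : ∀ c : (ResidueField R)ˣ, residue R ((lft c : R)) = (c : ResidueField R)) :
    ∃ φ₁ φ₂ : Matrix (Fin 2) (Fin 2) K → ℂ,
      (∀ (lam : Kˣ) (g : Matrix (Fin 2) (Fin 2) K), φ₁ ((lam : K) • g) = φ₁ g) ∧
      (∀ (lam : Kˣ) (g : Matrix (Fin 2) (Fin 2) K), φ₂ ((lam : K) • g) = φ₂ g) ∧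
      (∀ g : Matrix (Fin 2) (Fin 2) K,
        pStar R K π lft (extendToK R K (htildeR R)) g -
          pStar R K π lft (extendToK R K (ftildeR R)) g = φ₁ g + φ₂ g) ∧
      (∀ (a d : Rˣ) (g : Matrix (Fin 2) (Fin 2) K),
        φ₁ (g * Matrix.diagonal ![algebraMap R K (a : R), algebraMap R K (d : R)]) = φ₁ g) ∧
      (∀ (a d : Rˣ) (g : Matrix (Fin 2) (Fin 2) K),
        φ₂ (Matrix.diagonal ![algebraMap R K (a : R), algebraMap R K (d : R)] * g) =
          ((quadraticChar (ResidueField R) (residue R (a : R)) : ℤ) : ℂ) *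
            ((quadraticChar (ResidueField R) (residue R (d : R)) : ℤ) : ℂ) * φ₂ g) := by
  have hF := ringChar_ne_two_of_odd_card hodd
  have hπ' : Irreducible π := (IsDiscreteValuationRing.irreducible_iff_uniformizer π).mpr hπ
  refine ⟨invariantPart R K, eigenPart R K, invariantPart_units_smul, eigenPart_units_smul,
    fun g => ?_, fun a d g => ?_, fun a d g => ?_⟩
  · rw [htildeR_eq, ftildeR_eq]
    by_cases hg : (repsMM R K g).Nonempty
    · obtain ⟨n, M, hM, hmap⟩ := exists_zpow_smul_mem_repsMM hπ' hg
      have key := congrArg (Int.cast : ℤ → ℂ) <| hOfSigns_add_neg_sub_fOfSigns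
        (residueSigns_mem M) (det_residueSigns hM.1.1) (residueSigns_ne_zero hM.1.2)
      rw [pStar_ofSigns hF hπ' hlft _ hM.1 hmap, pStar_ofSigns hF hπ' hlft _ hM.1 hmap,
        invariantPart, if_pos hg, eigenPart_eq hM]
      push_cast at key
      linear_combination key / 4
    · rw [pStar_ofSigns_eq_zero hπ' lft _ hg, pStar_ofSigns_eq_zero hπ' lft _ hg, invariantPart,
        eigenPart, if_neg hg, dif_neg hg, sub_zero, add_zero]
  · rw [← map_diagonal_pair]
    exact invariantPart_mul (isUnit_det_diagonal_pair a d) g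
  · rw [← map_diagonal_pair]
    exact eigenPart_diagonal_mul a d g
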